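/- arXiv:2603.21392 — 3 statements merged into one kernel-verified Lean document; each statement's English description precedes it below -/
import Mathlib

section
/- Let G ∈ C¹(B_R) and α ≥ 1. Define e_r(x) = r² − |x|². Then for 0 < r < R, d/dr ∫_{B_r} G(x) e_r(x)^α dx = ((2α+n)/r) ∫_{B_r} G e_r^α dx + (1/r) ∫_{B_r} (x·∇G) e_r^α dx. -/
open MeasureTheory Metric Real Pointwise
open scoped RealInnerProductSpace Pointwise

lemma cov (n : ℕ) (f : EuclideanSpace ℝ (Fin n) → ℝ) {s : ℝ} (hs : 0 < s) :
    (∫ x in ball (0 : EuclideanSpace ℝ (Fin n)) s, f x)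
      = s ^ (n : ℝ) * ∫ y in ball (0 : EuclideanSpace ℝ (Fin n)) 1, f (s • y) := by
  have h1 : ∫ y in ball (0 : EuclideanSpace ℝ (Fin n)) 1, f (s • y)
      = (s ^ n)⁻¹ • ∫ x in s • ball (0 : EuclideanSpace ℝ (Fin n)) 1, f x := by
    have := Measure.setIntegral_comp_smul_of_pos (volume) f
      (ball (0 : EuclideanSpace ℝ (Fin n)) 1) hs
    rw [this, finrank_euclideanSpace_fin]
  have h2 : s • ball (0 : EuclideanSpace ℝ (Fin n)) 1 = ball 0 s := by
    rw [smul_unitBall_of_pos hs]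
  rw [h1, h2, smul_eq_mul, ← mul_assoc, Real.rpow_natCast,
    mul_inv_cancel₀ (by positivity), one_mul]

lemma key_eq (n : ℕ) (g : EuclideanSpace ℝ (Fin n) → ℝ) (α : ℝ) {s : ℝ} (hs : 0 < s) :
    (∫ x in ball (0 : EuclideanSpace ℝ (Fin n)) s, g x * (s ^ 2 - ‖x‖ ^ 2) ^ α)
      = s ^ ((n : ℝ) + 2 * α) *
        ∫ y in ball (0 : EuclideanSpace ℝ (Fin n)) 1, g (s • y) * (1 - ‖y‖ ^ 2) ^ α := by
  rw [cov n _ hs]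
  have hcongr : ∫ y in ball (0 : EuclideanSpace ℝ (Fin n)) 1,
        g (s • y) * (s ^ 2 - ‖s • y‖ ^ 2) ^ α
      = ∫ y in ball (0 : EuclideanSpace ℝ (Fin n)) 1,
        s ^ (2 * α) * (g (s • y) * (1 - ‖y‖ ^ 2) ^ α) := by
    refine setIntegral_congr_fun measurableSet_ball (fun y hy => ?_)
    have h1 : (0:ℝ) ≤ 1 - ‖y‖ ^ 2 := by
      have := mem_ball_zero_iff.1 hy
      nlinarith [norm_nonneg y]
    have h2 : ‖s • y‖ ^ 2 = s ^ 2 * ‖y‖ ^ 2 := by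
      rw [norm_smul, mul_pow, Real.norm_eq_abs, sq_abs]
    have h3 : (s ^ 2 - ‖s • y‖ ^ 2 : ℝ) ^ α = s ^ (2*α) * (1 - ‖y‖ ^ 2) ^ α := by
      rw [h2, show s ^ 2 - s ^ 2 * ‖y‖ ^ 2 = s ^ 2 * (1 - ‖y‖ ^ 2) by ring,
        Real.mul_rpow (sq_nonneg s) h1, ← Real.rpow_natCast s 2, ← Real.rpow_mul hs.le]
      norm_num
    rw [h3]; ring
  rw [hcongr, integral_const_mul, ← mul_assoc, ← Real.rpow_add hs]

set_option maxHeartbeats 1000000 in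
theorem stmt_1 (n : ℕ) (R α : ℝ) (G : EuclideanSpace ℝ (Fin n) → ℝ)
    (hG : ContDiffOn ℝ 1 G (ball 0 R)) (hα : 1 ≤ α)
    (r : ℝ) (hr : 0 < r) (hrR : r < R) :
    HasDerivAt (fun s : ℝ => ∫ x in ball (0 : EuclideanSpace ℝ (Fin n)) s,
        G x * (s ^ 2 - ‖x‖ ^ 2) ^ α)
      (((2 * α + n) / r) *
          (∫ x in ball (0 : EuclideanSpace ℝ (Fin n)) r,
            G x * (r ^ 2 - ‖x‖ ^ 2) ^ α)
        + (1 / r) *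
          (∫ x in ball (0 : EuclideanSpace ℝ (Fin n)) r,
            ⟪x, gradient G x⟫ * (r ^ 2 - ‖x‖ ^ 2) ^ α)) r := by
  classical
  have hα0 : (0:ℝ) ≤ α := by linarith
  have hR0 : 0 < R := hr.trans hrR
  set ρ : ℝ := (r + R) / 2 with hρdef
  have hrρ : r < ρ := by rw [hρdef]; linarith
  have hρR : ρ < R := by rw [hρdef]; linarith
  have hρ0 : 0 < ρ := by linarith
  set ε : ℝ := min (r / 2) ((R - r) / 2) with hεdef
  have hε : 0 < ε := lt_min (by linarith) (by linarith)
  have hball : ∀ s ∈ ball r ε, 0 < s ∧ s < ρ := by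
    intro s hs
    rw [mem_ball, Real.dist_eq, abs_lt] at hs
    have h1 : ε ≤ r / 2 := min_le_left _ _
    have h2 : ε ≤ (R - r) / 2 := min_le_right _ _
    constructor <;> [linarith [hs.1]; linarith [hs.2]]
  have hsub : closedBall (0:EuclideanSpace ℝ (Fin n)) ρ ⊆ ball (0:EuclideanSpace ℝ (Fin n)) R := closedBall_subset_ball hρR
  have hmem : ∀ s : ℝ, 0 < s → s ≤ ρ → ∀ y ∈ ball (0:EuclideanSpace ℝ (Fin n)) 1, s • y ∈ closedBall (0:EuclideanSpace ℝ (Fin n)) ρ := by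
    intro s hs0 hsρ y hy
    rw [mem_closedBall_zero_iff, norm_smul, Real.norm_eq_abs, abs_of_pos hs0]
    have hy1 : ‖y‖ < 1 := mem_ball_zero_iff.1 hy
    nlinarith [norm_nonneg y]
  -- continuity facts
  have hGc : ContinuousOn G (ball (0:EuclideanSpace ℝ (Fin n)) R) := hG.continuousOn
  have hgrad_cont : ContinuousOn (gradient G) (ball (0:EuclideanSpace ℝ (Fin n)) R) :=
    (InnerProductSpace.toDual ℝ (EuclideanSpace ℝ (Fin n))).symm.continuous.comp_continuousOn
      (hG.continuousOn_fderiv_of_isOpen isOpen_ball le_rfl)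
  have hw_cont : Continuous fun y : EuclideanSpace ℝ (Fin n) => (1 - ‖y‖ ^ 2 : ℝ) ^ α := by
    apply Continuous.rpow_const (by continuity)
    exact fun y => Or.inr hα0
  have hw_le_one : ∀ y ∈ ball (0:EuclideanSpace ℝ (Fin n)) 1, (1 - ‖y‖ ^ 2 : ℝ) ^ α ≤ 1 := by
    intro y hy
    have hy1 : ‖y‖ < 1 := mem_ball_zero_iff.1 hy
    exact Real.rpow_le_one (by nlinarith [norm_nonneg y]) (by nlinarith [norm_nonneg y]) hα0
  -- bounds
  obtain ⟨C, hC⟩ := (isCompact_closedBall (0:EuclideanSpace ℝ (Fin n)) ρ).exists_bound_of_continuousOn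
    (hgrad_cont.mono hsub)
  -- the inner function H and its derivative
  set H : ℝ → ℝ := fun s => ∫ y in ball (0:EuclideanSpace ℝ (Fin n)) 1, G (s • y) * (1 - ‖y‖ ^ 2) ^ α with hHdef
  set H' : ℝ := ∫ y in ball (0:EuclideanSpace ℝ (Fin n)) 1, ⟪y, gradient G (r • y)⟫ * (1 - ‖y‖ ^ 2) ^ α with hH'def
  have hfderiv : ∀ x ∈ ball (0:EuclideanSpace ℝ (Fin n)) R, HasFDerivAt G (fderiv ℝ G x) x := by
    intro x hx
    exact ((hG.differentiableOn one_ne_zero).differentiableAt (isOpen_ball.mem_nhds hx)).hasFDerivAt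
  have hfd_inner : ∀ x ∈ ball (0:EuclideanSpace ℝ (Fin n)) R, ∀ y : EuclideanSpace ℝ (Fin n), fderiv ℝ G x y = ⟪y, gradient G x⟫ := by
    intro x hx y
    rw [real_inner_comm]
    show _ = ⟪(InnerProductSpace.toDual ℝ (EuclideanSpace ℝ (Fin n))).symm (fderiv ℝ G x), y⟫
    rw [← InnerProductSpace.toDual_apply_apply, LinearIsometryEquiv.apply_symm_apply]
  have hH : HasDerivAt H H' r := by
    have := hasDerivAt_integral_of_dominated_loc_of_deriv_le (μ := volume.restrict (ball (0:EuclideanSpace ℝ (Fin n)) 1))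
      (F := fun s (y : EuclideanSpace ℝ (Fin n)) => G (s • y) * (1 - ‖y‖ ^ 2) ^ α)
      (F' := fun s (y : EuclideanSpace ℝ (Fin n)) => ⟪y, gradient G (s • y)⟫ * (1 - ‖y‖ ^ 2) ^ α)
      (x₀ := r) (bound := fun _ => C) (ball_mem_nhds r hε) ?_ ?_ ?_ ?_ ?_ ?_
    · exact this.2
    · -- measurability of F s for s near r
      filter_upwards [ball_mem_nhds r hε] with s hs
      obtain ⟨hs0, hsρ⟩ := hball s hs
      refine (ContinuousOn.mul ?_ hw_cont.continuousOn).aestronglyMeasurable measurableSet_ball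
      refine hGc.comp (continuous_const_smul s).continuousOn (fun y hy => ?_)
      exact hsub (hmem s hs0 hsρ.le y hy)
    · -- integrability of F r
      refine ((ContinuousOn.mul ?_ hw_cont.continuousOn).integrableOn_compact
        (isCompact_closedBall (0:EuclideanSpace ℝ (Fin n)) 1)).mono_set ball_subset_closedBall
      refine hGc.comp (continuous_const_smul r).continuousOn (fun y hy => ?_)
      rw [mem_closedBall_zero_iff] at hy
      rw [mem_ball_zero_iff, norm_smul, Real.norm_eq_abs, abs_of_pos hr]
      nlinarith [norm_nonneg y]
    · -- measurability of F' r
      refine (ContinuousOn.mul ?_ hw_cont.continuousOn).aestronglyMeasurable measurableSet_ball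
      refine ContinuousOn.inner continuousOn_id ?_
      refine hgrad_cont.comp (continuous_const_smul r).continuousOn (fun y hy => ?_)
      exact hsub (hmem r hr hrρ.le y hy)
    · -- bound
      rw [ae_restrict_iff' measurableSet_ball]
      refine ae_of_all _ (fun y hy s hs => ?_)
      obtain ⟨hs0, hsρ⟩ := hball s hs
      have hmem' : s • y ∈ closedBall (0:EuclideanSpace ℝ (Fin n)) ρ := hmem s hs0 hsρ.le y hy
      have h1 : |⟪y, gradient G (s • y)⟫| ≤ ‖gradient G (s • y)‖ := by
        calc |⟪y, gradient G (s • y)⟫| ≤ ‖y‖ * ‖gradient G (s • y)‖ := abs_real_inner_le_norm _ _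
        _ ≤ 1 * ‖gradient G (s • y)‖ := by
            have := (mem_ball_zero_iff.1 hy).le
            exact mul_le_mul_of_nonneg_right this (norm_nonneg _)
        _ = _ := one_mul _
      have h2 : (0:ℝ) ≤ (1 - ‖y‖ ^ 2) ^ α := by
        have hy1 : ‖y‖ < 1 := mem_ball_zero_iff.1 hy
        exact Real.rpow_nonneg (by nlinarith [norm_nonneg y]) α
      calc ‖⟪y, gradient G (s • y)⟫ * (1 - ‖y‖ ^ 2) ^ α‖
          = |⟪y, gradient G (s • y)⟫| * (1 - ‖y‖ ^ 2) ^ α := by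
            rw [Real.norm_eq_abs, abs_mul, abs_of_nonneg h2]
        _ ≤ ‖gradient G (s • y)‖ * 1 :=
            mul_le_mul h1 (hw_le_one y hy) h2 (norm_nonneg _)
        _ ≤ C := by rw [mul_one]; exact hC _ hmem'
    · exact integrableOn_const measure_ball_lt_top.ne
    · -- differentiability
      rw [ae_restrict_iff' measurableSet_ball]
      refine ae_of_all _ (fun y hy s hs => ?_)
      obtain ⟨hs0, hsρ⟩ := hball s hs
      have hmemR : s • y ∈ ball (0:EuclideanSpace ℝ (Fin n)) R := hsub (hmem s hs0 hsρ.le y hy)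
      have hd1 : HasDerivAt (fun t : ℝ => t • y) ((1:ℝ) • y) s :=
        (hasDerivAt_id s).smul_const y
      rw [one_smul] at hd1
      have hd2 : HasDerivAt (fun t : ℝ => G (t • y)) (fderiv ℝ G (s • y) y) s :=
        (hfderiv _ hmemR).comp_hasDerivAt s hd1
      rw [hfd_inner _ hmemR y] at hd2
      exact hd2.mul_const _
  -- product rule
  have hpow : HasDerivAt (fun s : ℝ => s ^ ((n:ℝ) + 2 * α))
      (((n:ℝ) + 2 * α) * r ^ ((n:ℝ) + 2 * α - 1)) r :=
    Real.hasDerivAt_rpow_const (Or.inl hr.ne')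
  have hmul := hpow.mul hH
  have heq : (fun s : ℝ => ∫ x in ball (0:EuclideanSpace ℝ (Fin n)) s, G x * (s ^ 2 - ‖x‖ ^ 2) ^ α)
      =ᶠ[nhds r] (fun s : ℝ => s ^ ((n:ℝ) + 2 * α) * H s) := by
    filter_upwards [eventually_gt_nhds hr] with s hs
    exact key_eq n G α hs
  have hfinal := hmul.congr_of_eventuallyEq heq
  refine hfinal.congr_deriv ?_
  -- now prove equality of the derivative values
  have e1 : (∫ x in ball (0:EuclideanSpace ℝ (Fin n)) r, G x * (r ^ 2 - ‖x‖ ^ 2) ^ α)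
      = r ^ ((n:ℝ) + 2 * α) * H r := key_eq n G α hr
  have e2 : (∫ x in ball (0:EuclideanSpace ℝ (Fin n)) r, ⟪x, gradient G x⟫ * (r ^ 2 - ‖x‖ ^ 2) ^ α)
      = r ^ ((n:ℝ) + 2 * α) * (r * H') := by
    rw [key_eq n (fun x => ⟪x, gradient G x⟫) α hr]
    congr 1
    have : ∫ y in ball (0:EuclideanSpace ℝ (Fin n)) 1, ⟪r • y, gradient G (r • y)⟫ * (1 - ‖y‖ ^ 2) ^ α
        = ∫ y in ball (0:EuclideanSpace ℝ (Fin n)) 1, r * (⟪y, gradient G (r • y)⟫ * (1 - ‖y‖ ^ 2) ^ α) := by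
      refine setIntegral_congr_fun measurableSet_ball (fun y _ => ?_)
      rw [real_inner_smul_left]; ring
    rw [this, integral_const_mul, hH'def]
  rw [e1, e2, Real.rpow_sub_one hr.ne']
  field_simp
  ring
end

section
/- With the notations H(r) = ∫_{B_r} u² e_r^{α−1} dx and I₀(r) = 2α ∫_{B_r} u (x·∇u) e_r^{α−1} dx for a C¹ function u, one has H'(r) = ((2α+n−2)/r) H(r) + (1/(αr)) I₀(r). -/
open MeasureTheory Metric Real
open scoped RealInnerProductSpace

theorem stmt_5_aux {E : Type*} [NormedAddCommGroup E] [InnerProductSpace ℝ E]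
    [FiniteDimensional ℝ E] [MeasurableSpace E] [BorelSpace E]
    (μ : Measure E) [μ.IsAddHaarMeasure] (R α : ℝ) (u : E → ℝ)
    (hu : ContDiffOn ℝ 1 u (ball 0 R)) (hα : 2 ≤ α)
    (r : ℝ) (hr : 0 < r) (hrR : r < R) :
    HasDerivAt (fun s : ℝ => ∫ x in ball (0 : E) s,
        u x ^ 2 * (s ^ 2 - ‖x‖ ^ 2) ^ (α - 1) ∂μ)
      (((2 * α + Module.finrank ℝ E - 2) / r) *
          (∫ x in ball (0 : E) r,
            u x ^ 2 * (r ^ 2 - ‖x‖ ^ 2) ^ (α - 1) ∂μ)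
        + (1 / (α * r)) *
          (2 * α * (∫ x in ball (0 : E) r,
            u x * ⟪x, gradient u x⟫ * (r ^ 2 - ‖x‖ ^ 2) ^ (α - 1) ∂μ))) r := by
  set n : ℕ := Module.finrank ℝ E with hn
  have hR0 : 0 < R := hr.trans hrR
  set c : ℝ := (r + R) / 2 with hcdef
  have hrc : r < c := by simp only [hcdef]; linarith
  have hcR : c < R := by simp only [hcdef]; linarith
  have hc0 : 0 < c := hr.trans hrc
  set ε : ℝ := min r (c - r) with hεdef
  have hε0 : 0 < ε := lt_min hr (by linarith)
  have hsmem : ∀ s ∈ ball r ε, 0 < s ∧ s < c := by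
    intro s hs
    rw [mem_ball, Real.dist_eq, abs_lt] at hs
    constructor
    · have := min_le_left r (c - r); linarith [hs.1]
    · have := min_le_right r (c - r); linarith [hs.2]
  have hdiff : ∀ z ∈ ball (0 : E) R, DifferentiableAt ℝ u z := fun z hz =>
    (hu.differentiableOn one_ne_zero).differentiableAt (isOpen_ball.mem_nhds hz)
  have hgradcont : ContinuousOn (gradient u) (ball (0 : E) R) := by
    have h1 : ContinuousOn (fderiv ℝ u) (ball (0 : E) R) :=
      hu.continuousOn_fderiv_of_isOpen isOpen_ball le_rfl
    exact ((InnerProductSpace.toDual ℝ E).symm.continuous.comp_continuousOn h1)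
  obtain ⟨M1, hM1⟩ := (isCompact_closedBall (0 : E) c).exists_bound_of_continuousOn
    (hu.continuousOn.mono (closedBall_subset_ball hcR))
  obtain ⟨M2, hM2⟩ := (isCompact_closedBall (0 : E) c).exists_bound_of_continuousOn
    (hgradcont.mono (closedBall_subset_ball hcR))
  have hM1' : 0 ≤ M1 := le_trans (norm_nonneg _) (hM1 0 (mem_closedBall_self hc0.le))
  have hM2' : 0 ≤ M2 := le_trans (norm_nonneg _) (hM2 0 (mem_closedBall_self hc0.le))
  have hmap : ∀ s : ℝ, 0 < s → s < c → ∀ y ∈ closedBall (0 : E) 1,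
      s • y ∈ closedBall (0 : E) c ∩ ball (0 : E) R := by
    intro s hs hsc y hy
    rw [mem_closedBall_zero_iff] at hy
    have hn' : ‖s • y‖ ≤ s := by
      rw [norm_smul, Real.norm_eq_abs, abs_of_pos hs]
      calc s * ‖y‖ ≤ s * 1 := by nlinarith
        _ = s := mul_one s
    exact ⟨mem_closedBall_zero_iff.2 (hn'.trans hsc.le),
      mem_ball_zero_iff.2 (lt_of_le_of_lt hn' (hsc.trans hcR))⟩
  set G : ℝ → ℝ := fun s => ∫ y in ball (0 : E) 1, u (s • y) ^ 2 * (1 - ‖y‖ ^ 2) ^ (α - 1) ∂μ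
    with hGdef
  set K : ℝ := ∫ y in ball (0 : E) 1,
      u (r • y) * ⟪y, gradient u (r • y)⟫ * (1 - ‖y‖ ^ 2) ^ (α - 1) ∂μ with hKdef
  have hwcont : Continuous fun y : E => (1 - ‖y‖ ^ 2) ^ (α - 1) := by
    apply Continuous.rpow_const (continuous_const.sub (continuous_norm.pow 2))
    intro y; right; linarith
  -- derivative of G via differentiation under the integral sign
  have hG : HasDerivAt G (2 * K) r := by
    have key := hasDerivAt_integral_of_dominated_loc_of_deriv_le
      (μ := μ.restrict (ball (0 : E) 1))
      (F := fun s y => u (s • y) ^ 2 * (1 - ‖y‖ ^ 2) ^ (α - 1))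
      (F' := fun s y => 2 * (u (s • y) * ⟪y, gradient u (s • y)⟫ * (1 - ‖y‖ ^ 2) ^ (α - 1)))
      (x₀ := r) (bound := fun _ => 2 * (M1 * M2)) (ball_mem_nhds r hε0) ?_ ?_ ?_ ?_ ?_ ?_
    · have h2 := key.2
      have heq : (∫ y in ball (0 : E) 1,
          2 * (u (r • y) * ⟪y, gradient u (r • y)⟫ * (1 - ‖y‖ ^ 2) ^ (α - 1)) ∂μ) = 2 * K := by
        rw [hKdef]; exact integral_const_mul 2 _
      rwa [heq] at h2
    · filter_upwards [ball_mem_nhds r hε0] with s hs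
      obtain ⟨hs0, hsc⟩ := hsmem s hs
      apply ContinuousOn.aestronglyMeasurable _ measurableSet_ball
      apply ContinuousOn.mul _ hwcont.continuousOn
      apply ContinuousOn.pow
      intro y hy
      have hy' : s • y ∈ ball (0 : E) R :=
        (hmap s hs0 hsc y (ball_subset_closedBall hy)).2
      exact ((hdiff _ hy').continuousAt.comp
        ((continuous_const_smul s).continuousAt)).continuousWithinAt
    · apply (ContinuousOn.integrableOn_compact (isCompact_closedBall (0 : E) 1) _).mono_set
        ball_subset_closedBall
      apply ContinuousOn.mul _ hwcont.continuousOn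
      apply ContinuousOn.pow
      intro y hy
      have hy' : r • y ∈ ball (0 : E) R := (hmap r hr hrc y hy).2
      exact ((hdiff _ hy').continuousAt.comp
        ((continuous_const_smul r).continuousAt)).continuousWithinAt
    · apply ContinuousOn.aestronglyMeasurable _ measurableSet_ball
      apply ContinuousOn.mul continuousOn_const
      apply ContinuousOn.mul _ hwcont.continuousOn
      have hmem' : ∀ y ∈ ball (0 : E) 1, r • y ∈ ball (0 : E) R := fun y hy =>
        (hmap r hr hrc y (ball_subset_closedBall hy)).2
      apply ContinuousOn.mul
      · intro y hy
        exact ((hdiff _ (hmem' y hy)).continuousAt.comp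
          ((continuous_const_smul r).continuousAt)).continuousWithinAt
      · apply ContinuousOn.inner (continuous_id.continuousOn)
        exact hgradcont.comp ((continuous_const_smul r).continuousOn) hmem'
    · filter_upwards [ae_restrict_mem measurableSet_ball] with y hy s hs
      obtain ⟨hs0, hsc⟩ := hsmem s hs
      have hy1 : ‖y‖ ≤ 1 := le_of_lt (mem_ball_zero_iff.1 hy)
      obtain ⟨hc1, -⟩ := hmap s hs0 hsc y (ball_subset_closedBall hy)
      have b1 : |u (s • y)| ≤ M1 := by
        have := hM1 _ hc1; rwa [Real.norm_eq_abs] at this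
      have b2 : |⟪y, gradient u (s • y)⟫| ≤ M2 := by
        refine (abs_real_inner_le_norm _ _).trans ?_
        calc ‖y‖ * ‖gradient u (s • y)‖ ≤ 1 * M2 :=
              mul_le_mul hy1 (hM2 _ hc1) (norm_nonneg _) zero_le_one
          _ = M2 := one_mul M2
      have b3 : |(1 - ‖y‖ ^ 2) ^ (α - 1)| ≤ 1 := by
        have hyn : 0 ≤ ‖y‖ := norm_nonneg y
        rw [abs_of_nonneg (Real.rpow_nonneg (by nlinarith) _)]
        exact Real.rpow_le_one (by nlinarith) (by nlinarith) (by linarith)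
      rw [Real.norm_eq_abs, abs_mul, abs_mul, abs_mul, abs_two]
      have b12 : |u (s • y)| * |⟪y, gradient u (s • y)⟫| ≤ M1 * M2 :=
        mul_le_mul b1 b2 (abs_nonneg _) hM1'
      have b123 : |u (s • y)| * |⟪y, gradient u (s • y)⟫| * |(1 - ‖y‖ ^ 2) ^ (α - 1)|
          ≤ (M1 * M2) * 1 := mul_le_mul b12 b3 (abs_nonneg _) (by positivity)
      nlinarith [b123]
    · refine integrable_const_iff.mpr (Or.inr ?_)
      constructor
      rw [Measure.restrict_apply_univ]
      exact measure_ball_lt_top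
    · filter_upwards [ae_restrict_mem measurableSet_ball] with y hy s hs
      obtain ⟨hs0, hsc⟩ := hsmem s hs
      have hy' : s • y ∈ ball (0 : E) R := (hmap s hs0 hsc y (ball_subset_closedBall hy)).2
      have hd := hdiff _ hy'
      have hsm : HasDerivAt (fun t : ℝ => t • y) y s := by
        simpa using (hasDerivAt_id s).smul_const y
      have hcomp : HasDerivAt (fun t : ℝ => u (t • y)) (⟪gradient u (s • y), y⟫) s := by
        have := (hd.hasGradientAt.hasFDerivAt).comp_hasDerivAt s hsm
        exact this.congr_deriv (by simp [InnerProductSpace.toDual_apply_apply])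
      have hfin := (hcomp.pow 2).mul_const ((1 - ‖y‖ ^ 2) ^ (α - 1))
      refine hfin.congr_deriv ?_
      rw [real_inner_comm]
      ring
  -- change of variables
  have hCOV : ∀ (f : E → ℝ) (s : ℝ), 0 < s →
      (∫ x in ball (0 : E) s, f x ∂μ) = (s ^ n) * ∫ y in ball (0 : E) 1, f (s • y) ∂μ := by
    intro f s hs
    have h := Measure.setIntegral_comp_smul_of_pos μ f (ball (0 : E) 1) hs
    rw [smul_unitBall_of_pos hs, smul_eq_mul, ← hn] at h
    rw [h, ← mul_assoc, mul_inv_cancel₀ (pow_ne_zero n hs.ne'), one_mul]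
  have hsq : ∀ (s : ℝ), 0 < s → ∀ y ∈ ball (0 : E) 1,
      (s ^ 2 - ‖s • y‖ ^ 2) ^ (α - 1) = (s ^ 2) ^ (α - 1) * (1 - ‖y‖ ^ 2) ^ (α - 1) := by
    intro s hs y hy
    have hy1 : ‖y‖ < 1 := mem_ball_zero_iff.1 hy
    have h1 : ‖s • y‖ ^ 2 = s ^ 2 * ‖y‖ ^ 2 := by
      rw [norm_smul, Real.norm_eq_abs, mul_pow, sq_abs]
    rw [h1, show s ^ 2 - s ^ 2 * ‖y‖ ^ 2 = s ^ 2 * (1 - ‖y‖ ^ 2) by ring,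
      Real.mul_rpow (sq_nonneg s) (by nlinarith [norm_nonneg y])]
  have hH : ∀ s : ℝ, 0 < s →
      (∫ x in ball (0 : E) s, u x ^ 2 * (s ^ 2 - ‖x‖ ^ 2) ^ (α - 1) ∂μ)
        = (s ^ n * (s ^ 2) ^ (α - 1)) * G s := by
    intro s hs
    rw [hCOV _ s hs]
    rw [show (∫ y in ball (0 : E) 1, u (s • y) ^ 2 * (s ^ 2 - ‖s • y‖ ^ 2) ^ (α - 1) ∂μ)
        = ∫ y in ball (0 : E) 1, (s ^ 2) ^ (α - 1) * (u (s • y) ^ 2 * (1 - ‖y‖ ^ 2) ^ (α - 1)) ∂μ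
      from setIntegral_congr_fun measurableSet_ball (fun y hy => by rw [hsq s hs y hy]; ring)]
    rw [integral_const_mul, hGdef]
    ring
  have hJ : (∫ x in ball (0 : E) r, u x * ⟪x, gradient u x⟫ * (r ^ 2 - ‖x‖ ^ 2) ^ (α - 1) ∂μ)
      = (r ^ n * (r ^ 2) ^ (α - 1) * r) * K := by
    rw [hCOV _ r hr]
    rw [show (∫ y in ball (0 : E) 1,
          u (r • y) * ⟪r • y, gradient u (r • y)⟫ * (r ^ 2 - ‖r • y‖ ^ 2) ^ (α - 1) ∂μ)
        = ∫ y in ball (0 : E) 1, ((r ^ 2) ^ (α - 1) * r) *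
            (u (r • y) * ⟪y, gradient u (r • y)⟫ * (1 - ‖y‖ ^ 2) ^ (α - 1)) ∂μ
      from setIntegral_congr_fun measurableSet_ball (fun y hy => by
        rw [hsq r hr y hy, real_inner_smul_left]; ring)]
    rw [integral_const_mul, hKdef]
    ring
  -- derivative of the scaling factor
  have hψ : HasDerivAt (fun s : ℝ => s ^ n * (s ^ 2) ^ (α - 1))
      ((n : ℝ) * r ^ (n - 1) * (r ^ 2) ^ (α - 1)
        + r ^ n * (2 * r ^ 1 * (α - 1) * (r ^ 2) ^ (α - 1 - 1))) r := by
    have h1 : HasDerivAt (fun s : ℝ => s ^ n) ((n : ℝ) * r ^ (n - 1)) r := hasDerivAt_pow n r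
    have h2 : HasDerivAt (fun s : ℝ => (s ^ 2) ^ (α - 1))
        (2 * r ^ 1 * (α - 1) * (r ^ 2) ^ (α - 1 - 1)) r := by
      have h3 := (hasDerivAt_pow 2 r).rpow_const (p := α - 1)
        (Or.inl (pow_ne_zero 2 hr.ne'))
      convert h3 using 1
      norm_num
    exact h1.mul h2
  have hP := hψ.mul hG
  have heq : (fun s : ℝ => ∫ x in ball (0 : E) s, u x ^ 2 * (s ^ 2 - ‖x‖ ^ 2) ^ (α - 1) ∂μ)
      =ᶠ[nhds r] fun s => (s ^ n * (s ^ 2) ^ (α - 1)) * G s := by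
    filter_upwards [Ioo_mem_nhds hr hrR] with s hs
    exact hH s hs.1
  rw [Filter.EventuallyEq.hasDerivAt_iff heq]
  refine hP.congr_deriv ?_
  rw [hH r hr, hJ]
  have hα0 : α ≠ 0 := by linarith
  have hr0 : (r : ℝ) ≠ 0 := hr.ne'
  have key1 : (r ^ 2) ^ (α - 1 - 1) * r ^ 2 = (r ^ 2) ^ (α - 1) := by
    rw [show α - 1 = (α - 1 - 1) + 1 by ring, Real.rpow_add (by positivity), Real.rpow_one]
    ring_nf
  have key2 : (n : ℝ) * r ^ (n - 1) * r = (n : ℝ) * r ^ n := by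
    cases n with
    | zero => simp
    | succ m => rw [pow_succ]; push_cast; ring
  set A : ℝ := (r ^ 2) ^ (α - 1) with hA
  set B : ℝ := (r ^ 2) ^ (α - 1 - 1) with hB
  field_simp
  linear_combination (2 * r ^ n * G r * (α - 1)) * key1 + (A * G r) * key2

theorem stmt_5 (n : ℕ) (R α : ℝ) (u : EuclideanSpace ℝ (Fin n) → ℝ)
    (hu : ContDiffOn ℝ 1 u (ball 0 R)) (hα : 2 ≤ α)
    (r : ℝ) (hr : 0 < r) (hrR : r < R) :
    HasDerivAt (fun s : ℝ => ∫ x in ball (0 : EuclideanSpace ℝ (Fin n)) s,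
        u x ^ 2 * (s ^ 2 - ‖x‖ ^ 2) ^ (α - 1))
      (((2 * α + n - 2) / r) *
          (∫ x in ball (0 : EuclideanSpace ℝ (Fin n)) r,
            u x ^ 2 * (r ^ 2 - ‖x‖ ^ 2) ^ (α - 1))
        + (1 / (α * r)) *
          (2 * α * (∫ x in ball (0 : EuclideanSpace ℝ (Fin n)) r,
            u x * ⟪x, gradient u x⟫ * (r ^ 2 - ‖x‖ ^ 2) ^ (α - 1)))) r := by
  have := stmt_5_aux (volume : Measure (EuclideanSpace ℝ (Fin n))) R α u hu hα r hr hrR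
  rwa [finrank_euclideanSpace_fin] at this
end

section
/- With A as above (symmetric, uniformly elliptic with constants λ, Λ, Lipschitz with constant L_A, A(0) = I) and ν(x) = A(x)x·x/|x|², define ω(x) = A(x)x/ν(x). Then ω(x)·x = |x|² for all x ≠ 0, and there is C = C(n,λ,Λ) such that |ω(x) − x| ≤ C L_A |x|², |∇ω(x) − I| ≤ C L_A |x|, and |div ω(x) − n| ≤ C L_A |x|. -/
open MeasureTheory Metric Real Topology Filter

lemma abs_mul_le' {a b A B : ℝ} (h1 : |a| ≤ A) (h2 : |b| ≤ B) : |a * b| ≤ A * B := by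
  rw [abs_mul]; exact mul_le_mul h1 h2 (abs_nonneg _) ((abs_nonneg a).trans h1)

lemma abs_sub_le'' (a b : ℝ) : |a - b| ≤ |a| + |b| := by
  rw [sub_eq_add_neg]; exact (abs_add_le _ _).trans (by rw [abs_neg])

lemma abs_add5 (a b c d e : ℝ) : |a + b + c + d - e| ≤ |a| + |b| + |c| + |d| + |e| := by
  have h1 : |a + b + c + d - e| ≤ |a + b + c + d| + |e| := abs_sub_le'' _ _
  have h2 : |a + b + c + d| ≤ |a + b + c| + |d| := abs_add_le _ _
  have h3 : |a + b + c| ≤ |a + b| + |c| := abs_add_le _ _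
  have h4 : |a + b| ≤ |a| + |b| := abs_add_le _ _
  linarith

lemma abs_sum_le {N : ℕ} (f : Fin N → ℝ) {B : ℝ} (h : ∀ k, |f k| ≤ B) :
    |∑ k, f k| ≤ N * B := by
  calc |∑ k, f k| ≤ ∑ k, |f k| := Finset.abs_sum_le_sum_abs f _
    _ ≤ ∑ _k : Fin N, B := Finset.sum_le_sum fun k _ => h k
    _ = N * B := by simp [mul_comm]

lemma sqrt_sum_sq_le {N : ℕ} {f : Fin N → ℝ} {B : ℝ} (hB : 0 ≤ B) (h : ∀ i, |f i| ≤ B) :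
    Real.sqrt (∑ i, f i ^ 2) ≤ N * B := by
  have hNB : 0 ≤ (N : ℝ) * B := by positivity
  have h1 : ∑ i, f i ^ 2 ≤ (N * B) ^ 2 := by
    have h0 : ∑ i, f i ^ 2 ≤ ∑ _i : Fin N, B ^ 2 :=
      Finset.sum_le_sum fun i _ => by
        have := h i; nlinarith [abs_nonneg (f i), sq_abs (f i)]
    have h2 : ∑ _i : Fin N, B ^ 2 = (N : ℝ) * B ^ 2 := by
      simp [Finset.sum_const, nsmul_eq_mul]
    rcases Nat.eq_zero_or_pos N with hN | hN
    · subst hN; simpa using h0.trans (le_of_eq h2)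
    · have h3 : (1 : ℝ) ≤ (N : ℝ) := by exact_mod_cast hN
      nlinarith [sq_nonneg B]
  calc Real.sqrt (∑ i, f i ^ 2) ≤ Real.sqrt ((N * B) ^ 2) := Real.sqrt_le_sqrt h1
    _ = N * B := Real.sqrt_sq hNB

lemma sqrt_sum2_sq_le {N : ℕ} {f : Fin N → Fin N → ℝ} {B : ℝ} (hB : 0 ≤ B)
    (h : ∀ i j, |f i j| ≤ B) :
    Real.sqrt (∑ i, ∑ j, f i j ^ 2) ≤ (N * N) * B := by
  have hNB : 0 ≤ ((N : ℝ) * N) * B := by positivity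
  have h1 : ∑ i, ∑ j, f i j ^ 2 ≤ (((N : ℝ) * N) * B) ^ 2 := by
    have h0 : ∑ i, ∑ j, f i j ^ 2 ≤ ∑ _i : Fin N, ∑ _j : Fin N, B ^ 2 :=
      Finset.sum_le_sum fun i _ => Finset.sum_le_sum fun j _ => by
        have := h i j; nlinarith [abs_nonneg (f i j), sq_abs (f i j)]
    have h2 : ∑ _i : Fin N, ∑ _j : Fin N, B ^ 2 = ((N : ℝ) * N) * B ^ 2 := by
      simp [Finset.sum_const, nsmul_eq_mul]; ring
    rcases Nat.eq_zero_or_pos N with hN | hN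
    · subst hN; simpa using h0.trans (le_of_eq h2)
    · have h3 : (1 : ℝ) ≤ (N : ℝ) := by exact_mod_cast hN
      have hNN : (0:ℝ) ≤ (N : ℝ) * N := by positivity
      have h6 : (1:ℝ) ≤ (N : ℝ) * N := by nlinarith
      have h4 : (N : ℝ) * N * B ^ 2 ≤ ((N : ℝ) * N) ^ 2 * B ^ 2 := by
        nlinarith [mul_nonneg (mul_nonneg hNN (sub_nonneg.2 h6)) (sq_nonneg B)]
      have h5 : (((N : ℝ) * N) * B) ^ 2 = ((N : ℝ) * N) ^ 2 * B ^ 2 := by ring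
      linarith [h0.trans (le_of_eq h2)]
  calc Real.sqrt (∑ i, ∑ j, f i j ^ 2) ≤ Real.sqrt ((((N : ℝ) * N) * B) ^ 2) :=
        Real.sqrt_le_sqrt h1
    _ = ((N : ℝ) * N) * B := Real.sqrt_sq hNB

lemma entry_bound {n : ℕ} {lam Lam : ℝ} (hlam : 0 < lam) (hLam : lam ≤ Lam)
    {M : Matrix (Fin n) (Fin n) ℝ} (hsym : M.IsSymm)
    (hell : ∀ ξ : Fin n → ℝ, lam * (∑ i, ξ i ^ 2) ≤ ∑ i, ∑ j, M i j * ξ i * ξ j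
        ∧ (∑ i, ∑ j, M i j * ξ i * ξ j) ≤ Lam * (∑ i, ξ i ^ 2)) (i j : Fin n) :
    |M i j| ≤ Lam := by
  have hdiag : ∀ k : Fin n, lam ≤ M k k ∧ M k k ≤ Lam := by
    intro k
    have h := hell (fun l => if l = k then 1 else 0)
    simp only [ite_mul, mul_ite, mul_zero, zero_mul, mul_one, one_mul,
      Finset.sum_ite_eq', Finset.mem_univ, if_true, ite_pow, one_pow] at h
    simpa using h
  by_cases hij : i = j
  · subst hij
    rcases hdiag i with ⟨h1, h2⟩
    exact abs_le.2 ⟨by linarith, h2⟩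
  · have quad : ∀ b : ℝ,
        (∑ k, ∑ l, M k l * ((if k = i then 1 else 0) + (if k = j then b else 0))
          * ((if l = i then 1 else 0) + (if l = j then b else 0)))
        = M i i + M i j * b + M j i * b + M j j * b * b := by
      intro b
      simp only [mul_add, add_mul, mul_ite, ite_mul, mul_zero, zero_mul, mul_one, one_mul,
        Finset.sum_add_distrib, Finset.sum_ite_eq', Finset.mem_univ, if_true]
      ring
    have hsq : ∀ b : ℝ,
        (∑ k, ((if k = i then (1:ℝ) else 0) + (if k = j then b else 0)) ^ 2) = 1 + b ^ 2 := by
      intro b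
      have h : ∀ k : Fin n, ((if k = i then (1:ℝ) else 0) + (if k = j then b else 0)) ^ 2
          = (if k = i then (1:ℝ) else 0) + (if k = j then b ^ 2 else 0) := by
        intro k
        by_cases h1 : k = i <;> by_cases h2 : k = j <;> simp_all [hij]
      simp [h, Finset.sum_add_distrib, Finset.sum_ite_eq']
    have hMji : M j i = M i j := hsym.apply i j
    have hp := hell (fun k => (if k = i then 1 else 0) + (if k = j then (1:ℝ) else 0))
    have hm := hell (fun k => (if k = i then 1 else 0) + (if k = j then (-1:ℝ) else 0))
    rw [quad 1, hsq 1] at hp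
    rw [quad (-1), hsq (-1)] at hm
    rcases hdiag i with ⟨hi1, hi2⟩
    rcases hdiag j with ⟨hj1, hj2⟩
    rw [hMji] at hp hm
    rw [abs_le]
    constructor <;> nlinarith [hp.1, hp.2, hm.1, hm.2]

open Classical in
noncomputable def nuFun (n : ℕ)
    (A : EuclideanSpace ℝ (Fin n) → Matrix (Fin n) (Fin n) ℝ)
    (x : EuclideanSpace ℝ (Fin n)) : ℝ :=
  if x = 0 then 1 else (∑ i, ∑ j, A x i j * x i * x j) / ‖x‖ ^ 2

noncomputable def omegaComp (n : ℕ)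
    (A : EuclideanSpace ℝ (Fin n) → Matrix (Fin n) (Fin n) ℝ)
    (x : EuclideanSpace ℝ (Fin n)) (i : Fin n) : ℝ :=
  (nuFun n A x)⁻¹ * (A x).mulVec (fun k => x k) i

set_option maxHeartbeats 4000000 in
theorem stmt_14 (n : ℕ) (lam Lam : ℝ) (hlam : 0 < lam) (hLam : lam ≤ Lam) :
    ∃ C > 0, ∀ (R LA : ℝ)
      (A : EuclideanSpace ℝ (Fin n) → Matrix (Fin n) (Fin n) ℝ),
      0 < R → 0 ≤ LA →
      (∀ x, (A x).IsSymm) →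
      A 0 = 1 →
      (∀ x ∈ ball (0 : EuclideanSpace ℝ (Fin n)) R, ∀ ξ : Fin n → ℝ,
        lam * (∑ i, ξ i ^ 2) ≤ ∑ i, ∑ j, A x i j * ξ i * ξ j
        ∧ (∑ i, ∑ j, A x i j * ξ i * ξ j) ≤ Lam * (∑ i, ξ i ^ 2)) →
      (∀ i j, ∀ x ∈ ball (0 : EuclideanSpace ℝ (Fin n)) R,
        DifferentiableAt ℝ (fun y => A y i j) x) →
      (∀ i j, ∀ x ∈ ball (0 : EuclideanSpace ℝ (Fin n)) R,
        ‖fderiv ℝ (fun y => A y i j) x‖ ≤ LA) →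
      ∀ x ∈ ball (0 : EuclideanSpace ℝ (Fin n)) R, x ≠ 0 →
        (∑ i, omegaComp n A x i * x i) = ‖x‖ ^ 2 ∧
        Real.sqrt (∑ i, (omegaComp n A x i - x i) ^ 2) ≤ C * LA * ‖x‖ ^ 2 ∧
        Real.sqrt (∑ i, ∑ j,
            (fderiv ℝ (fun y => omegaComp n A y i) x (EuclideanSpace.single j 1)
              - (if i = j then (1 : ℝ) else 0)) ^ 2) ≤ C * LA * ‖x‖ ∧
        |(∑ i, fderiv ℝ (fun y => omegaComp n A y i) x (EuclideanSpace.single i 1))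
            - (n : ℝ)| ≤ C * LA * ‖x‖ := by
  classical
  have hLam0 : 0 < Lam := lt_of_lt_of_le hlam hLam
  have hC1nn : (0:ℝ) ≤ (5*((n:ℝ)+1)^3*Lam/lam^2) :=
    div_nonneg (mul_nonneg (by positivity) hLam0.le) (sq_nonneg lam)
  have hC2nn : (0:ℝ) ≤ (((n:ℝ) + (n:ℝ)^2)/lam) := div_nonneg (by positivity) hlam.le
  refine ⟨(n:ℝ)*(((n:ℝ) + (n:ℝ)^2)/lam) + ((n:ℝ)*(n:ℝ))*(5*((n:ℝ)+1)^3*Lam/lam^2) + (n:ℝ)*(5*((n:ℝ)+1)^3*Lam/lam^2) + 1, by positivity, ?_⟩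
  intro R LA A hR hLA hsym hA0 hell hdiff hder x hx hx0
  have hxn : (0:ℝ) < ‖x‖ := norm_pos_iff.mpr hx0
  have hnorm2 : ∀ y : EuclideanSpace ℝ (Fin n), (∑ k, y k * y k) = ‖y‖ ^ 2 := by
    intro y
    rw [EuclideanSpace.norm_eq, Real.sq_sqrt (by positivity)]
    exact Finset.sum_congr rfl fun k _ => by
      rw [Real.norm_eq_abs, sq_abs, sq]
  have hgpos : ∀ y ∈ ball (0 : EuclideanSpace ℝ (Fin n)) R, y ≠ 0 →
      0 < ∑ k, ∑ l, A y k l * y k * y l := by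
    intro y hy hy0
    have h := (hell y hy (fun k => y k)).1
    have h2 : 0 < ∑ k, (y k) ^ 2 := by
      have hy2 := hnorm2 y
      have hny : (0:ℝ) < ‖y‖ := norm_pos_iff.mpr hy0
      calc (0:ℝ) < ‖y‖ ^ 2 := by positivity
        _ = ∑ k, (y k) ^ 2 := by
            rw [← hy2]; exact Finset.sum_congr rfl fun k _ => (sq (y k)).symm ▸ rfl
    calc (0:ℝ) < lam * ∑ k, (y k) ^ 2 := by positivity
      _ ≤ _ := h
  have hG0 : 0 < (∑ k, ∑ l, A x k l * x k * x l) := hgpos x hx hx0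
  have hGne : (∑ k, ∑ l, A x k l * x k * x l) ≠ 0 := ne_of_gt hG0
  have hU : ball (0 : EuclideanSpace ℝ (Fin n)) R ∩ {y | y ≠ 0} ∈ 𝓝 x :=
    (isOpen_ball.inter isOpen_compl_singleton).mem_nhds ⟨hx, hx0⟩
  have homega : ∀ (i : Fin n), ∀ y ∈ ball (0 : EuclideanSpace ℝ (Fin n)) R, y ≠ 0 →
      omegaComp n A y i
        = (∑ k, y k * y k) * (∑ k, ∑ l, A y k l * y k * y l)⁻¹ * (∑ l, A y i l * y l) := by
    intro i y hy hy0
    have hgy : 0 < ∑ k, ∑ l, A y k l * y k * y l := hgpos y hy hy0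
    have hny : (0:ℝ) < ‖y‖ := norm_pos_iff.mpr hy0
    rw [omegaComp, nuFun, if_neg hy0]
    have hmv : (A y).mulVec (fun k => y k) i = ∑ l, A y i l * y l := by
      simp [Matrix.mulVec, dotProduct]
    rw [hmv, inv_div, hnorm2 y]
    field_simp
  have hEq : ∀ i : Fin n, (fun y => omegaComp n A y i) =ᶠ[𝓝 x]
      (fun y => (∑ k, y k * y k) * (∑ k, ∑ l, A y k l * y k * y l)⁻¹ * (∑ l, A y i l * y l)) :=
    fun i => Filter.eventuallyEq_of_mem hU (fun y hy => homega i y hy.1 hy.2)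
  have hco : ∀ k : Fin n, HasFDerivAt (𝕜 := ℝ) (fun y : EuclideanSpace ℝ (Fin n) => y k)
      (PiLp.proj 2 (fun _ : Fin n => ℝ) k) x := fun k =>
    (PiLp.proj (𝕜 := ℝ) 2 (fun _ : Fin n => ℝ) k).hasFDerivAt (x := x)
  have hA' : ∀ k l, HasFDerivAt (fun y => A y k l) (fderiv ℝ (fun y => A y k l) x) x :=
    fun k l => (hdiff k l x hx).hasFDerivAt
  have hPfd : HasFDerivAt (fun y : EuclideanSpace ℝ (Fin n) => ∑ k, y k * y k)
      (∑ k, (x k • (PiLp.proj 2 (fun _ : Fin n => ℝ) k : EuclideanSpace ℝ (Fin n) →L[ℝ] ℝ)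
        + x k • (PiLp.proj 2 (fun _ : Fin n => ℝ) k : EuclideanSpace ℝ (Fin n) →L[ℝ] ℝ))) x :=
    HasFDerivAt.fun_sum (fun k _ => (hco k).mul (hco k))
  have hgfd : HasFDerivAt (fun y : EuclideanSpace ℝ (Fin n) => ∑ k, ∑ l, A y k l * y k * y l)
      (∑ k, ∑ l, ((A x k l * x k) • (PiLp.proj 2 (fun _ : Fin n => ℝ) l : EuclideanSpace ℝ (Fin n) →L[ℝ] ℝ)
        + x l • (A x k l • (PiLp.proj 2 (fun _ : Fin n => ℝ) k : EuclideanSpace ℝ (Fin n) →L[ℝ] ℝ)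
          + x k • fderiv ℝ (fun y => A y k l) x))) x :=
    HasFDerivAt.fun_sum fun k _ => HasFDerivAt.fun_sum fun l _ => ((hA' k l).mul (hco k)).mul (hco l)
  have hqfd : HasFDerivAt
      (fun y : EuclideanSpace ℝ (Fin n) => (∑ k, ∑ l, A y k l * y k * y l)⁻¹)
      ((-((∑ k, ∑ l, A x k l * x k * x l) ^ 2)⁻¹)
        • (∑ k, ∑ l, ((A x k l * x k) • (PiLp.proj 2 (fun _ : Fin n => ℝ) l : EuclideanSpace ℝ (Fin n) →L[ℝ] ℝ)
        + x l • (A x k l • (PiLp.proj 2 (fun _ : Fin n => ℝ) k : EuclideanSpace ℝ (Fin n) →L[ℝ] ℝ)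
          + x k • fderiv ℝ (fun y => A y k l) x)))) x :=
    (hasDerivAt_inv hG0.ne').comp_hasFDerivAt x hgfd
  have hmfd : ∀ i : Fin n, HasFDerivAt (fun y : EuclideanSpace ℝ (Fin n) => ∑ l, A y i l * y l)
      (∑ l, (A x i l • (PiLp.proj 2 (fun _ : Fin n => ℝ) l : EuclideanSpace ℝ (Fin n) →L[ℝ] ℝ)
        + x l • fderiv ℝ (fun y => A y i l) x)) x :=
    fun i => HasFDerivAt.fun_sum fun l _ => (hA' i l).mul (hco l)
  have key := fun i : Fin n => ((hEq i).fderiv_eq).trans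
    (HasFDerivAt.fderiv ((hPfd.mul hqfd).mul (hmfd i)))
  -- symmetric rewrites
  have hmsym : ∀ j : Fin n, (∑ k, A x k j * x k) = (∑ l, A x j l * x l) :=
    fun j => Finset.sum_congr rfl fun k _ => by rw [(hsym x).apply j k]
  have hmsym2 : ∀ j : Fin n, (∑ k, x k * A x j k) = (∑ l, A x j l * x l) :=
    fun j => Finset.sum_congr rfl fun k _ => mul_comm _ _
  -- entry formula for the derivative
  have hW2 : ∀ i j : Fin n,
      fderiv ℝ (fun y => omegaComp n A y i) x (EuclideanSpace.single j 1) - (if i = j then (1:ℝ) else 0)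
      = ((∑ k, x k * x k)*(∑ k, ∑ l, A x k l * x k * x l)*(A x i j - (if i = j then (1:ℝ) else 0)) + (∑ k, x k * x k)*(∑ k, ∑ l, A x k l * x k * x l)*(∑ l, x l * (fderiv ℝ (fun y => A y i l) x) (EuclideanSpace.single j 1)) + (if i = j then (1:ℝ) else 0)*(∑ k, ∑ l, A x k l * x k * x l)*((∑ k, x k * x k) - (∑ k, ∑ l, A x k l * x k * x l)) + 2*(∑ l, A x i l * x l)*(x j*(∑ k, ∑ l, A x k l * x k * x l) - (∑ k, x k * x k)*(∑ l, A x j l * x l)) - (∑ l, A x i l * x l)*(∑ k, x k * x k)*(∑ k, ∑ l, x l * (x k * (fderiv ℝ (fun y => A y k l) x) (EuclideanSpace.single j 1)))) * (((∑ k, ∑ l, A x k l * x k * x l))^2)⁻¹ := by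
    intro i j
    rw [key i]
    simp only [ContinuousLinearMap.add_apply, ContinuousLinearMap.smul_apply,
      ContinuousLinearMap.coe_sum', Finset.sum_apply, smul_eq_mul,
      PiLp.proj_apply, EuclideanSpace.single_apply,
      mul_ite, mul_one, mul_zero, mul_add, Finset.sum_add_distrib, Finset.sum_ite_irrel,
      Finset.sum_const_zero, Finset.sum_ite_eq', Finset.mem_univ, if_true, Pi.mul_apply]
    rw [hmsym j, hmsym2 j]
    set S := (∑ k, x k * x k)
    set G := (∑ k, ∑ l, A x k l * x k * x l)
    set T := (∑ l, x l * (fderiv ℝ (fun y => A y i l) x) (EuclideanSpace.single j 1))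
    set Q := (∑ k, ∑ l, x l * (x k * (fderiv ℝ (fun y => A y k l) x) (EuclideanSpace.single j 1)))
    by_cases hij : i = j
    · simp only [hij, if_true]
      field_simp
      ring
    · simp only [if_neg hij]
      field_simp
      ring
  -- basic estimates
  have hsq2 : (∑ k, (x k) ^ 2) = ‖x‖ ^ 2 := by
    rw [← hnorm2 x]; exact Finset.sum_congr rfl fun k _ => pow_two (x k)
  have hSx : (∑ k, x k * x k) = ‖x‖ ^ 2 := hnorm2 x
  have hSnn : (0:ℝ) ≤ (∑ k, x k * x k) := by rw [hSx]; positivity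
  have hGlow : lam * ‖x‖ ^ 2 ≤ (∑ k, ∑ l, A x k l * x k * x l) := by
    have h := (hell x hx (fun k => x k)).1
    rwa [hsq2] at h
  have hGhigh : (∑ k, ∑ l, A x k l * x k * x l) ≤ Lam * ‖x‖ ^ 2 := by
    have h := (hell x hx (fun k => x k)).2
    rwa [hsq2] at h
  have hSabs : |(∑ k, x k * x k)| ≤ ‖x‖ ^ 2 := by rw [abs_of_nonneg hSnn, hSx]
  have hGabs : |(∑ k, ∑ l, A x k l * x k * x l)| ≤ Lam * ‖x‖ ^ 2 := by rw [abs_of_pos hG0]; exact hGhigh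
  have habsA : ∀ k l, |A x k l| ≤ Lam :=
    entry_bound hlam hLam (hsym x) (fun ξ => hell x hx ξ)
  have hAd : ∀ k l : Fin n, |A x k l - (if k = l then (1:ℝ) else 0)| ≤ LA * ‖x‖ := by
    intro k l
    have h := Convex.norm_image_sub_le_of_norm_fderiv_le (f := fun y => A y k l)
      (hdiff k l) (hder k l) (convex_ball _ _) (mem_ball_self hR) hx
    simpa [hA0, Matrix.one_apply, Real.norm_eq_abs] using h
  have hxk : ∀ k, |x k| ≤ ‖x‖ := by
    intro k
    have h1 : (x k) ^ 2 ≤ ‖x‖ ^ 2 := by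
      rw [← hsq2]
      exact Finset.single_le_sum (f := fun l => (x l) ^ 2) (fun l _ => sq_nonneg _)
        (Finset.mem_univ k)
    calc |x k| = Real.sqrt ((x k) ^ 2) := (Real.sqrt_sq_eq_abs _).symm
      _ ≤ Real.sqrt (‖x‖ ^ 2) := Real.sqrt_le_sqrt h1
      _ = ‖x‖ := Real.sqrt_sq (norm_nonneg x)
  have hDb : ∀ k l j : Fin n,
      |(fderiv ℝ (fun y => A y k l) x) (EuclideanSpace.single j 1)| ≤ LA := by
    intro k l j
    calc |(fderiv ℝ (fun y => A y k l) x) (EuclideanSpace.single j 1)|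
        ≤ ‖fderiv ℝ (fun y => A y k l) x‖ * ‖(EuclideanSpace.single j (1:ℝ) : EuclideanSpace ℝ (Fin n))‖ := by
          rw [← Real.norm_eq_abs]
          exact (fderiv ℝ (fun y => A y k l) x).le_opNorm _
      _ ≤ LA * 1 := by
          rw [EuclideanSpace.norm_single, norm_one]
          exact mul_le_mul_of_nonneg_right (hder k l x hx) zero_le_one
      _ = LA := mul_one _
  -- derived estimates
  have hmb : ∀ i, |(∑ l, A x i l * x l)| ≤ (n:ℝ) * (Lam * ‖x‖) := fun i =>
    abs_sum_le _ (fun l => abs_mul_le' (habsA i l) (hxk l))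
  have hmx : ∀ i : Fin n, |(∑ l, A x i l * x l) - x i| ≤ (n:ℝ) * (LA * ‖x‖ * ‖x‖) := by
    intro i
    have hrw : (∑ l, A x i l * x l) - x i = ∑ l, (A x i l - (if i = l then (1:ℝ) else 0)) * x l := by
      simp only [sub_mul, Finset.sum_sub_distrib, ite_mul, one_mul, zero_mul,
        Finset.sum_ite_eq, Finset.mem_univ, if_true]
    rw [hrw]
    exact abs_sum_le _ (fun l => abs_mul_le' (hAd i l) (hxk l))
  have hGS : |(∑ k, ∑ l, A x k l * x k * x l) - (∑ k, x k * x k)| ≤ (n:ℝ) * ((n:ℝ) * (LA * ‖x‖ * ‖x‖ * ‖x‖)) := by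
    have hrw : (∑ k, ∑ l, A x k l * x k * x l) - (∑ k, x k * x k)
        = ∑ k, ∑ l, (A x k l - (if k = l then (1:ℝ) else 0)) * x k * x l := by
      simp only [sub_mul, Finset.sum_sub_distrib, ite_mul, one_mul, zero_mul,
        Finset.sum_ite_eq, Finset.mem_univ, if_true]
    rw [hrw]
    exact abs_sum_le _ (fun k => abs_sum_le _
      (fun l => abs_mul_le' (abs_mul_le' (hAd k l) (hxk k)) (hxk l)))
  have hT : ∀ i j : Fin n, |(∑ l, x l * (fderiv ℝ (fun y => A y i l) x) (EuclideanSpace.single j 1))| ≤ (n:ℝ) * (‖x‖ * LA) := fun i j =>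
    abs_sum_le _ (fun l => abs_mul_le' (hxk l) (hDb i l j))
  have hQ : ∀ j : Fin n, |(∑ k, ∑ l, x l * (x k * (fderiv ℝ (fun y => A y k l) x) (EuclideanSpace.single j 1)))| ≤ (n:ℝ) * ((n:ℝ) * (‖x‖ * (‖x‖ * LA))) := fun j =>
    abs_sum_le _ (fun k => abs_sum_le _
      (fun l => abs_mul_le' (hxk l) (abs_mul_le' (hxk k) (hDb k l j))))
  have hdel : ∀ i j : Fin n, |(if i = j then (1:ℝ) else 0)| ≤ 1 := by
    intro i j; split <;> simp
  -- per-entry derivative bound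
  have hent : ∀ i j : Fin n,
      |fderiv ℝ (fun y => omegaComp n A y i) x (EuclideanSpace.single j 1) - (if i = j then (1:ℝ) else 0)|
      ≤ (5*((n:ℝ)+1)^3*Lam/lam^2) * (LA * ‖x‖) := by
    intro i j
    rw [hW2 i j, abs_mul, abs_inv, abs_of_pos (pow_pos hG0 2)]
    have hp1 : |(∑ k, x k * x k) * (∑ k, ∑ l, A x k l * x k * x l) * (A x i j - (if i = j then (1:ℝ) else 0))|
        ≤ ‖x‖^2 * (Lam * ‖x‖^2) * (LA * ‖x‖) :=
      abs_mul_le' (abs_mul_le' hSabs hGabs) (hAd i j)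
    have hp2 : |(∑ k, x k * x k) * (∑ k, ∑ l, A x k l * x k * x l) * (∑ l, x l * (fderiv ℝ (fun y => A y i l) x) (EuclideanSpace.single j 1))|
        ≤ ‖x‖^2 * (Lam * ‖x‖^2) * ((n:ℝ) * (‖x‖ * LA)) :=
      abs_mul_le' (abs_mul_le' hSabs hGabs) (hT i j)
    have hp3 : |(if i = j then (1:ℝ) else 0) * (∑ k, ∑ l, A x k l * x k * x l) * ((∑ k, x k * x k) - (∑ k, ∑ l, A x k l * x k * x l))|
        ≤ 1 * (Lam * ‖x‖^2) * ((n:ℝ) * ((n:ℝ) * (LA * ‖x‖ * ‖x‖ * ‖x‖))) := by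
      refine abs_mul_le' (abs_mul_le' (hdel i j) hGabs) ?_
      rw [abs_sub_comm]; exact hGS
    have hinner : |x j * (∑ k, ∑ l, A x k l * x k * x l) - (∑ k, x k * x k) * (∑ l, A x j l * x l)|
        ≤ ‖x‖ * ((n:ℝ) * ((n:ℝ) * (LA * ‖x‖ * ‖x‖ * ‖x‖))) + ‖x‖^2 * ((n:ℝ) * (LA * ‖x‖ * ‖x‖)) := by
      have hr : x j * (∑ k, ∑ l, A x k l * x k * x l) - (∑ k, x k * x k) * (∑ l, A x j l * x l)
          = x j * ((∑ k, ∑ l, A x k l * x k * x l) - (∑ k, x k * x k)) - (∑ k, x k * x k) * ((∑ l, A x j l * x l) - x j) := by ring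
      rw [hr]
      refine (abs_sub_le'' _ _).trans (add_le_add ?_ ?_)
      · exact abs_mul_le' (hxk j) hGS
      · exact abs_mul_le' hSabs (hmx j)
    have hp4 : |2 * (∑ l, A x i l * x l) * (x j * (∑ k, ∑ l, A x k l * x k * x l) - (∑ k, x k * x k) * (∑ l, A x j l * x l))|
        ≤ 2 * ((n:ℝ) * (Lam * ‖x‖)) * (‖x‖ * ((n:ℝ) * ((n:ℝ) * (LA * ‖x‖ * ‖x‖ * ‖x‖))) + ‖x‖^2 * ((n:ℝ) * (LA * ‖x‖ * ‖x‖))) := by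
      refine abs_mul_le' (abs_mul_le' ?_ (hmb i)) hinner
      rw [abs_two]
    have hp5 : |(∑ l, A x i l * x l) * (∑ k, x k * x k) * (∑ k, ∑ l, x l * (x k * (fderiv ℝ (fun y => A y k l) x) (EuclideanSpace.single j 1)))|
        ≤ ((n:ℝ) * (Lam * ‖x‖)) * ‖x‖^2 * ((n:ℝ) * ((n:ℝ) * (‖x‖ * (‖x‖ * LA)))) :=
      abs_mul_le' (abs_mul_le' (hmb i) hSabs) (hQ j)
    have habs5 := abs_add5 ((∑ k, x k * x k) * (∑ k, ∑ l, A x k l * x k * x l) * (A x i j - (if i = j then (1:ℝ) else 0))) ((∑ k, x k * x k) * (∑ k, ∑ l, A x k l * x k * x l) * (∑ l, x l * (fderiv ℝ (fun y => A y i l) x) (EuclideanSpace.single j 1)))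
      ((if i = j then (1:ℝ) else 0) * (∑ k, ∑ l, A x k l * x k * x l) * ((∑ k, x k * x k) - (∑ k, ∑ l, A x k l * x k * x l))) (2 * (∑ l, A x i l * x l) * (x j * (∑ k, ∑ l, A x k l * x k * x l) - (∑ k, x k * x k) * (∑ l, A x j l * x l)))
      ((∑ l, A x i l * x l) * (∑ k, x k * x k) * (∑ k, ∑ l, x l * (x k * (fderiv ℝ (fun y => A y k l) x) (EuclideanSpace.single j 1))))
    set M : ℝ := Lam * (LA * ‖x‖^5) with hM
    have hMnn : 0 ≤ M := mul_nonneg hLam0.le (by positivity)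
    have hq1 : ‖x‖^2 * (Lam * ‖x‖^2) * (LA * ‖x‖) = 1 * M := by rw [hM]; ring
    have hq2 : ‖x‖^2 * (Lam * ‖x‖^2) * ((n:ℝ) * (‖x‖ * LA)) = (n:ℝ) * M := by rw [hM]; ring
    have hq3 : 1 * (Lam * ‖x‖^2) * ((n:ℝ) * ((n:ℝ) * (LA * ‖x‖ * ‖x‖ * ‖x‖)))
        = (n:ℝ)^2 * M := by rw [hM]; ring
    have hq4 : 2 * ((n:ℝ) * (Lam * ‖x‖)) * (‖x‖ * ((n:ℝ) * ((n:ℝ) * (LA * ‖x‖ * ‖x‖ * ‖x‖))) + ‖x‖^2 * ((n:ℝ) * (LA * ‖x‖ * ‖x‖)))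
        = (2*(n:ℝ)^3 + 2*(n:ℝ)^2) * M := by rw [hM]; ring
    have hq5 : ((n:ℝ) * (Lam * ‖x‖)) * ‖x‖^2 * ((n:ℝ) * ((n:ℝ) * (‖x‖ * (‖x‖ * LA))))
        = (n:ℝ)^3 * M := by rw [hM]; ring
    have hn0 : (0:ℝ) ≤ (n:ℝ) := Nat.cast_nonneg n
    have hpoly : (1 + (n:ℝ) + 3*(n:ℝ)^2 + 3*(n:ℝ)^3) ≤ 5*((n:ℝ)+1)^3 := by nlinarith
    have hfin : (1 + (n:ℝ) + 3*(n:ℝ)^2 + 3*(n:ℝ)^3) * M ≤ 5*((n:ℝ)+1)^3 * M :=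
      mul_le_mul_of_nonneg_right hpoly hMnn
    have hsumeq : 1 * M + (n:ℝ) * M + (n:ℝ)^2 * M + (2*(n:ℝ)^3 + 2*(n:ℝ)^2) * M + (n:ℝ)^3 * M
        = (1 + (n:ℝ) + 3*(n:ℝ)^2 + 3*(n:ℝ)^3) * M := by ring
    have hN3 : |((∑ k, x k * x k)*(∑ k, ∑ l, A x k l * x k * x l)*(A x i j - (if i = j then (1:ℝ) else 0)) + (∑ k, x k * x k)*(∑ k, ∑ l, A x k l * x k * x l)*(∑ l, x l * (fderiv ℝ (fun y => A y i l) x) (EuclideanSpace.single j 1)) + (if i = j then (1:ℝ) else 0)*(∑ k, ∑ l, A x k l * x k * x l)*((∑ k, x k * x k) - (∑ k, ∑ l, A x k l * x k * x l)) + 2*(∑ l, A x i l * x l)*(x j*(∑ k, ∑ l, A x k l * x k * x l) - (∑ k, x k * x k)*(∑ l, A x j l * x l)) - (∑ l, A x i l * x l)*(∑ k, x k * x k)*(∑ k, ∑ l, x l * (x k * (fderiv ℝ (fun y => A y k l) x) (EuclideanSpace.single j 1))))| ≤ 5*((n:ℝ)+1)^3 * M := by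
      rw [hq1] at hp1; rw [hq2] at hp2; rw [hq3] at hp3; rw [hq4] at hp4; rw [hq5] at hp5
      linarith
    have hginv : (((∑ k, ∑ l, A x k l * x k * x l))^2)⁻¹ ≤ ((lam * ‖x‖^2)^2)⁻¹ := by
      apply inv_anti₀ (by positivity)
      exact pow_le_pow_left₀ (by positivity) hGlow 2
    calc |((∑ k, x k * x k)*(∑ k, ∑ l, A x k l * x k * x l)*(A x i j - (if i = j then (1:ℝ) else 0)) + (∑ k, x k * x k)*(∑ k, ∑ l, A x k l * x k * x l)*(∑ l, x l * (fderiv ℝ (fun y => A y i l) x) (EuclideanSpace.single j 1)) + (if i = j then (1:ℝ) else 0)*(∑ k, ∑ l, A x k l * x k * x l)*((∑ k, x k * x k) - (∑ k, ∑ l, A x k l * x k * x l)) + 2*(∑ l, A x i l * x l)*(x j*(∑ k, ∑ l, A x k l * x k * x l) - (∑ k, x k * x k)*(∑ l, A x j l * x l)) - (∑ l, A x i l * x l)*(∑ k, x k * x k)*(∑ k, ∑ l, x l * (x k * (fderiv ℝ (fun y => A y k l) x) (EuclideanSpace.single j 1))))| * (((∑ k, ∑ l, A x k l * x k * x l))^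2)⁻¹
        ≤ (5*((n:ℝ)+1)^3 * M) * ((lam * ‖x‖^2)^2)⁻¹ :=
          mul_le_mul hN3 hginv (by positivity) (by positivity)
      _ = (5*((n:ℝ)+1)^3*Lam/lam^2) * (LA * ‖x‖) := by
          rw [hM]; field_simp
  -- first claim
  have hclaim1 : (∑ i, omegaComp n A x i * x i) = ‖x‖ ^ 2 := by
    have hterm : ∀ i : Fin n, omegaComp n A x i * x i = (∑ k, x k * x k) * ((∑ k, ∑ l, A x k l * x k * x l))⁻¹ * ((∑ l, A x i l * x l) * x i) :=
      fun i => by rw [homega i x hx hx0]; ring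
    rw [Finset.sum_congr rfl (fun i _ => hterm i), ← Finset.mul_sum]
    have hGm : (∑ i, (∑ l, A x i l * x l) * x i) = (∑ k, ∑ l, A x k l * x k * x l) := by
      refine Finset.sum_congr rfl fun i _ => ?_
      rw [Finset.sum_mul]
      exact Finset.sum_congr rfl fun l _ => by ring
    rw [hGm, mul_assoc, inv_mul_cancel₀ hGne, mul_one, hSx]
  -- second claim
  have homx : ∀ i : Fin n, |omegaComp n A x i - x i| ≤ (((n:ℝ) + (n:ℝ)^2)/lam) * (LA * ‖x‖^2) := by
    intro i
    have h1 : omegaComp n A x i - x i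
        = ((∑ k, x k * x k) * ((∑ l, A x i l * x l) - x i) - ((∑ k, ∑ l, A x k l * x k * x l) - (∑ k, x k * x k)) * x i) * ((∑ k, ∑ l, A x k l * x k * x l))⁻¹ := by
      rw [homega i x hx hx0]; field_simp; ring
    rw [h1, abs_mul, abs_inv, abs_of_pos hG0]
    have hnum : |(∑ k, x k * x k) * ((∑ l, A x i l * x l) - x i) - ((∑ k, ∑ l, A x k l * x k * x l) - (∑ k, x k * x k)) * x i|
        ≤ ‖x‖^2 * ((n:ℝ) * (LA * ‖x‖ * ‖x‖)) + (n:ℝ) * ((n:ℝ) * (LA * ‖x‖ * ‖x‖ * ‖x‖)) * ‖x‖ :=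
      (abs_sub_le'' _ _).trans (add_le_add (abs_mul_le' hSabs (hmx i)) (abs_mul_le' hGS (hxk i)))
    have hginv : ((∑ k, ∑ l, A x k l * x k * x l))⁻¹ ≤ (lam * ‖x‖^2)⁻¹ := inv_anti₀ (by positivity) hGlow
    calc |(∑ k, x k * x k) * ((∑ l, A x i l * x l) - x i) - ((∑ k, ∑ l, A x k l * x k * x l) - (∑ k, x k * x k)) * x i| * ((∑ k, ∑ l, A x k l * x k * x l))⁻¹
        ≤ (‖x‖^2 * ((n:ℝ) * (LA * ‖x‖ * ‖x‖)) + (n:ℝ) * ((n:ℝ) * (LA * ‖x‖ * ‖x‖ * ‖x‖)) * ‖x‖) * (lam * ‖x‖^2)⁻¹ := by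
          apply mul_le_mul hnum hginv (by positivity) ?_
          positivity
      _ = (((n:ℝ) + (n:ℝ)^2)/lam) * (LA * ‖x‖^2) := by field_simp
  -- assemble
  refine ⟨hclaim1, ?_, ?_, ?_⟩
  · have h := sqrt_sum_sq_le (f := fun i => omegaComp n A x i - x i)
      (B := (((n:ℝ) + (n:ℝ)^2)/lam) * (LA * ‖x‖^2)) (by positivity) homx
    calc Real.sqrt (∑ i, (omegaComp n A x i - x i) ^ 2)
        ≤ (n:ℝ) * ((((n:ℝ) + (n:ℝ)^2)/lam) * (LA * ‖x‖^2)) := h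
      _ = ((n:ℝ) * (((n:ℝ) + (n:ℝ)^2)/lam)) * (LA * ‖x‖^2) := by ring
      _ ≤ ((n:ℝ)*(((n:ℝ) + (n:ℝ)^2)/lam) + ((n:ℝ)*(n:ℝ))*(5*((n:ℝ)+1)^3*Lam/lam^2) + (n:ℝ)*(5*((n:ℝ)+1)^3*Lam/lam^2) + 1) * (LA * ‖x‖^2) := by
          apply mul_le_mul_of_nonneg_right ?_ (by positivity)
          have hn0 : (0:ℝ) ≤ (n:ℝ) := Nat.cast_nonneg n
          nlinarith [hC1nn]
      _ = ((n:ℝ)*(((n:ℝ) + (n:ℝ)^2)/lam) + ((n:ℝ)*(n:ℝ))*(5*((n:ℝ)+1)^3*Lam/lam^2) + (n:ℝ)*(5*((n:ℝ)+1)^3*Lam/lam^2) + 1) * LA * ‖x‖^2 := by ring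
  · have h := sqrt_sum2_sq_le
      (f := fun i j => fderiv ℝ (fun y => omegaComp n A y i) x (EuclideanSpace.single j 1) - (if i = j then (1:ℝ) else 0))
      (B := (5*((n:ℝ)+1)^3*Lam/lam^2) * (LA * ‖x‖)) (by positivity) hent
    calc Real.sqrt (∑ i, ∑ j, (fderiv ℝ (fun y => omegaComp n A y i) x (EuclideanSpace.single j 1) - (if i = j then (1:ℝ) else 0)) ^ 2)
        ≤ ((n:ℝ) * (n:ℝ)) * ((5*((n:ℝ)+1)^3*Lam/lam^2) * (LA * ‖x‖)) := h
      _ = (((n:ℝ)*(n:ℝ))*(5*((n:ℝ)+1)^3*Lam/lam^2)) * (LA * ‖x‖) := by ring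
      _ ≤ ((n:ℝ)*(((n:ℝ) + (n:ℝ)^2)/lam) + ((n:ℝ)*(n:ℝ))*(5*((n:ℝ)+1)^3*Lam/lam^2) + (n:ℝ)*(5*((n:ℝ)+1)^3*Lam/lam^2) + 1) * (LA * ‖x‖) := by
          apply mul_le_mul_of_nonneg_right ?_ (by positivity)
          have hn0 : (0:ℝ) ≤ (n:ℝ) := Nat.cast_nonneg n
          nlinarith [hC2nn, hC1nn]
      _ = ((n:ℝ)*(((n:ℝ) + (n:ℝ)^2)/lam) + ((n:ℝ)*(n:ℝ))*(5*((n:ℝ)+1)^3*Lam/lam^2) + (n:ℝ)*(5*((n:ℝ)+1)^3*Lam/lam^2) + 1) * LA * ‖x‖ := by ring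
  · have h1 : (∑ i, fderiv ℝ (fun y => omegaComp n A y i) x (EuclideanSpace.single i 1)) - (n:ℝ)
        = ∑ i, (fderiv ℝ (fun y => omegaComp n A y i) x (EuclideanSpace.single i 1)
            - (if i = i then (1:ℝ) else 0)) := by
      rw [Finset.sum_sub_distrib]
      simp
    rw [h1]
    have h := abs_sum_le (fun i : Fin n =>
      fderiv ℝ (fun y => omegaComp n A y i) x (EuclideanSpace.single i 1)
        - (if i = i then (1:ℝ) else 0)) (B := (5*((n:ℝ)+1)^3*Lam/lam^2) * (LA * ‖x‖)) (fun i => hent i i)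
    calc _ ≤ (n:ℝ) * ((5*((n:ℝ)+1)^3*Lam/lam^2) * (LA * ‖x‖)) := h
      _ = ((n:ℝ)*(5*((n:ℝ)+1)^3*Lam/lam^2)) * (LA * ‖x‖) := by ring
      _ ≤ ((n:ℝ)*(((n:ℝ) + (n:ℝ)^2)/lam) + ((n:ℝ)*(n:ℝ))*(5*((n:ℝ)+1)^3*Lam/lam^2) + (n:ℝ)*(5*((n:ℝ)+1)^3*Lam/lam^2) + 1) * (LA * ‖x‖) := by
          apply mul_le_mul_of_nonneg_right ?_ (by positivity)
          have hn0 : (0:ℝ) ≤ (n:ℝ) := Nat.cast_nonneg n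
          nlinarith [hC2nn, hC1nn]
      _ = ((n:ℝ)*(((n:ℝ) + (n:ℝ)^2)/lam) + ((n:ℝ)*(n:ℝ))*(5*((n:ℝ)+1)^3*Lam/lam^2) + (n:ℝ)*(5*((n:ℝ)+1)^3*Lam/lam^2) + 1) * LA * ‖x‖ := by ring
end
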